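/- Let R be an algebraic curvature tensor on ℝ⁴ that is Einstein with ρ = (τ/4)·Id, and suppose an orthonormal basis satisfies the Chern conditions R_{1213} = R_{1214} = R_{1223} = R_{1224} = R_{1314} = R_{1323} = 0. Then additionally R_{1224} = R_{1334} = R_{2334} = R_{1424} = R_{1434} = R_{2434} = 0 and R_{1212} = R_{3434}, R_{1313} = R_{2424}, R_{1414} = R_{2323}; i.e., the basis is a Singer–Thorpe basis. -/

import Mathlib

/-- Ricci tensor of an algebraic curvature tensor, `ρ i j = ∑ a, R a i j a`
(sign convention so that ρ is the usual Ricci contraction). -/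
def Ric {n : ℕ} (R : Fin n → Fin n → Fin n → Fin n → ℝ) (i j : Fin n) : ℝ :=
  ∑ a, R a i j a

/-- Scalar curvature `τ = ∑ i, ρ i i`. -/
def scalCurv {n : ℕ} (R : Fin n → Fin n → Fin n → Fin n → ℝ) : ℝ :=
  ∑ i, Ric R i i

/-- Squared norm of the curvature tensor, `|R|² = ∑ R_{ijkl}²`. -/
def normR2 {n : ℕ} (R : Fin n → Fin n → Fin n → Fin n → ℝ) : ℝ :=
  ∑ i, ∑ j, ∑ k, ∑ l, (R i j k l) ^ 2

/-- Squared norm of the Ricci tensor, `|ρ|² = ∑ ρ_{ij}²`. -/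
def normRic2 {n : ℕ} (R : Fin n → Fin n → Fin n → Fin n → ℝ) : ℝ :=
  ∑ i, ∑ j, (Ric R i j) ^ 2

/-- `R` is an algebraic curvature tensor: antisymmetry in the first and last pairs,
pair-interchange symmetry, and the first Bianchi identity. -/
def IsACT {n : ℕ} (R : Fin n → Fin n → Fin n → Fin n → ℝ) : Prop :=
  (∀ i j k l, R i j k l = - R j i k l) ∧
  (∀ i j k l, R i j k l = - R i j l k) ∧
  (∀ i j k l, R i j k l = R k l i j) ∧
  (∀ i j k l, R i j k l + R j k i l + R k i j l = 0)

/-- Kronecker delta. -/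
def kron {n : ℕ} (i j : Fin n) : ℝ := if i = j then 1 else 0

/-!
Writing `ρ_{ij} = -∑ₐ R_{iaja}`, each off-diagonal Einstein equation `ρ_{ij} = 0` in dimension four is a
sum of two curvature components, one of which is a Chern component; so the other vanishes. The diagonal
equations say that the symmetric matrix of sectional curvatures `K_{ij} = R_{ijij}`, whose diagonal is zero,
has constant row sums, which forces `K_{01} = K_{23}`, `K_{02} = K_{13}` and `K_{03} = K_{12}`.
-/

theorem opposite_entries_eq_of_row_sums_eq (K : Fin 4 → Fin 4 → ℝ) (hsymm : ∀ i j, K i j = K j i)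
    (hdiag : ∀ i, K i i = 0) (hrow : ∀ i j, ∑ a, K i a = ∑ a, K j a) :
    K 0 1 = K 2 3 ∧ K 0 2 = K 1 3 ∧ K 0 3 = K 1 2 := by
  have h01 := hrow 0 1
  have h23 := hrow 2 3
  have h02 := hrow 0 2
  simp only [Fin.sum_univ_four, hdiag] at h01 h23 h02
  refine ⟨?_, ?_, ?_⟩ <;>
    linarith [hsymm 1 0, hsymm 2 0, hsymm 3 0, hsymm 2 1, hsymm 3 1, hsymm 3 2]

section Curvature

variable {n : ℕ} {R : Fin n → Fin n → Fin n → Fin n → ℝ}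

theorem apply_self_left_eq_zero (hR : ∀ i j k l, R i j k l = -R j i k l) (i k l : Fin n) :
    R i i k l = 0 := by
  linarith [hR i i k l]

theorem apply_self_right_eq_zero (hR : ∀ i j k l, R i j k l = -R i j l k) (i j k : Fin n) :
    R i j k k = 0 := by
  linarith [hR i j k k]

theorem Ric_eq_neg_sum (hR : ∀ i j k l, R i j k l = -R j i k l) (i j : Fin n) :
    Ric R i j = -∑ a, R i a j a := by
  rw [Ric, ← Finset.sum_neg_distrib]
  exact Finset.sum_congr rfl fun a _ => hR a i j a

theorem Ric_eq_zero_of_ne {c : ℝ} (hE : ∀ i j, Ric R i j = c * kron i j) {i j : Fin n}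
    (hij : i ≠ j) : Ric R i j = 0 := by
  simp [hE, kron, hij]

theorem Ric_self_eq_Ric_self {c : ℝ} (hE : ∀ i j, Ric R i j = c * kron i j) (i j : Fin n) :
    Ric R i i = Ric R j j := by
  simp [hE, kron]

end Curvature

theorem einstein_chern_is_singer_thorpe_general (R : Fin 4 → Fin 4 → Fin 4 → Fin 4 → ℝ) (hR : IsACT R)
    (hE : ∀ i j, Ric R i j = scalCurv R / 4 * kron i j)
    (hC1 : R 0 1 0 2 = 0) (hC2 : R 0 1 0 3 = 0) (hC3 : R 0 1 1 2 = 0)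
    (hC4 : R 0 1 1 3 = 0) (hC6 : R 0 2 1 2 = 0) :
    R 0 1 1 3 = 0 ∧ R 0 2 2 3 = 0 ∧ R 1 2 2 3 = 0 ∧ R 0 3 1 3 = 0 ∧
    R 0 3 2 3 = 0 ∧ R 1 3 2 3 = 0 ∧
    R 0 1 0 1 = R 2 3 2 3 ∧ R 0 2 0 2 = R 1 3 1 3 ∧ R 0 3 0 3 = R 1 2 1 2 := by
  obtain ⟨hfirst, hlast, -, -⟩ := hR
  have hoff (i j : Fin 4) (hij : i ≠ j) : ∑ a, R i a j a = 0 := by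
    rw [← neg_eq_zero, ← Ric_eq_neg_sum hfirst, Ric_eq_zero_of_ne hE hij]
  have h01 := hoff 0 1 (by decide)
  have h02 := hoff 0 2 (by decide)
  have h03 := hoff 0 3 (by decide)
  have h12 := hoff 1 2 (by decide)
  have h13 := hoff 1 3 (by decide)
  simp only [Fin.sum_univ_four, apply_self_left_eq_zero hfirst, apply_self_right_eq_zero hlast]
    at h01 h02 h03 h12 h13
  have hsec := opposite_entries_eq_of_row_sums_eq (fun i j => R i j i j)
    (fun i j => by rw [hfirst, hlast, neg_neg]) (fun i => apply_self_left_eq_zero hfirst i i i)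
    (fun i j => by simpa [Ric_eq_neg_sum hfirst] using Ric_self_eq_Ric_self hE i j)
  refine ⟨hC4, ?_, ?_, ?_, ?_, ?_, hsec⟩
  · linarith [hlast 0 1 3 1, hlast 0 2 3 2]
  · linarith [hfirst 1 0 3 0, hlast 0 1 3 0, hlast 1 2 3 2]
  · linarith
  · linarith [hlast 0 1 2 1]
  · linarith [hfirst 1 0 2 0, hlast 0 1 2 0]

theorem einstein_chern_is_singer_thorpe (R : Fin 4 → Fin 4 → Fin 4 → Fin 4 → ℝ) (hR : IsACT R)
    (hE : ∀ i j, Ric R i j = scalCurv R / 4 * kron i j)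
    (hC1 : R 0 1 0 2 = 0) (hC2 : R 0 1 0 3 = 0) (hC3 : R 0 1 1 2 = 0)
    (hC4 : R 0 1 1 3 = 0) (hC5 : R 0 2 0 3 = 0) (hC6 : R 0 2 1 2 = 0) :
    R 0 1 1 3 = 0 ∧ R 0 2 2 3 = 0 ∧ R 1 2 2 3 = 0 ∧ R 0 3 1 3 = 0 ∧
    R 0 3 2 3 = 0 ∧ R 1 3 2 3 = 0 ∧
    R 0 1 0 1 = R 2 3 2 3 ∧ R 0 2 0 2 = R 1 3 1 3 ∧ R 0 3 0 3 = R 1 2 1 2 :=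
  einstein_chern_is_singer_thorpe_general R hR hE hC1 hC2 hC3 hC4 hC6
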